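/- arXiv:1112.0331 — 3 statements merged into one kernel-verified Lean document; each statement's English description precedes it below -/
import Mathlib

section
/- For the unit disc D in ℂ and A = (-1,1) ⊂ D, the relative extremal function of A with respect to D satisfies h_{A,D}(ζ) = (2/π)|Arg((1+ζ)/(1-ζ))| for all ζ ∈ D. -/
open Set Filter Topology

noncomputable section

/-- Plurisubharmonicity on a set, via upper semicontinuity together with the
sub-mean-value property along complex lines, expressed through majorization by
real parts of holomorphic polynomials (harmonic majorants) on circles. -/
def PlurisubharmonicOn {E : Type*} [NormedAddCommGroup E] [NormedSpace ℂ E]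
    (u : E → EReal) (s : Set E) : Prop :=
  UpperSemicontinuousOn u s ∧
  ∀ (a v : E) (r : ℝ), 0 < r →
    (∀ t : ℂ, ‖t‖ ≤ r → a + t • v ∈ s) →
    ∀ p : Polynomial ℂ,
      (∀ t : ℂ, ‖t‖ = r → u (a + t • v) ≤ (((p.eval t).re : ℝ) : EReal)) →
      u a ≤ (((p.eval 0).re : ℝ) : EReal)

/-- A set is pluripolar if it is contained in the `-∞` locus of a global
plurisubharmonic function which is not identically `-∞`. -/
def Pluripolar {E : Type*} [NormedAddCommGroup E] [NormedSpace ℂ E] (M : Set E) : Prop :=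
  ∃ u : E → EReal, PlurisubharmonicOn u Set.univ ∧ (∃ z, u z ≠ ⊥) ∧ M ⊆ {z | u z = ⊥}

/-- The relative extremal function `h_{A,D}`:
`h_{A,D}(z) = sup {u(z) : u ∈ PSH(D), u ≤ 1 on D, u ≤ 0 on A}`. -/
def relExtremal {E : Type*} [NormedAddCommGroup E] [NormedSpace ℂ E]
    (A D : Set E) (z : E) : ℝ :=
  sSup ((fun u : E → ℝ => u z) ''
    {u | PlurisubharmonicOn (fun w => ((u w : ℝ) : EReal)) D ∧
      (∀ w ∈ D, u w ≤ 1) ∧ ∀ w ∈ A, u w ≤ 0})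

/-- The upper semicontinuous regularization `h*_{A,D}` of the relative extremal
function. -/
def uscRelExtremal {E : Type*} [NormedAddCommGroup E] [NormedSpace ℂ E]
    (A D : Set E) (z : E) : ℝ :=
  Filter.limsup (relExtremal A D) (nhds z)

/-- A set `A` is locally pluriregular if it is nonempty and `h*_{A∩U,U}(a) = 0`
for every `a ∈ A` and every open neighborhood `U` of `a`. -/
def LocallyPluriregular {E : Type*} [NormedAddCommGroup E] [NormedSpace ℂ E]
    (A : Set E) : Prop :=
  A.Nonempty ∧ ∀ a ∈ A, ∀ U : Set E, IsOpen U → a ∈ U → uscRelExtremal (A ∩ U) U a = 0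

/-!
The candidate `h = (2/π)|arg((1+z)/(1-z))|` is the absolute value of the real part of the
holomorphic function `-(2i/π) log((1+z)/(1-z))`, hence plurisubharmonic; it is at most `1` on the
disc and vanishes on the interval, so it is a competitor. Conversely, on each half-disc
`±Im z > 0` the function `h` is itself the real part of a holomorphic function, so for a
competitor `u` the function `u - h + ε log|(1 - z²)/2|` again has the sub-mean-value property,
and its upper limits at the boundary are `≤ 0`: `u ≤ 0` on the interval, `h → 1` on the open
arcs, and the logarithm tends to `-∞` at `±1`. The maximum principle and `ε → 0` give `u ≤ h`.

Plurisubharmonicity is defined through polynomial majorants on circles, so the maximum principle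
is proved from scratch: a Fejér-type polynomial peaking at a point of a circle shows that a
maximum at the centre of a disc is attained on the whole circle, and adding the real part of a
holomorphic function preserves the majorant property because its Taylor polynomials converge
uniformly on circles.
-/

open Polynomial Metric Complex
open scoped Real ComplexConjugate

section PolySubmean

variable {u : ℂ → ℝ} {s : Set ℂ}

def PolySubmeanOn (u : ℂ → ℝ) (s : Set ℂ) : Prop :=
  ∀ a r, 0 < r → closedBall a r ⊆ s → ∀ p : ℂ[X],
    (∀ t : ℂ, ‖t‖ = r → u (a + t) ≤ (p.eval t).re) → u a ≤ (p.eval 0).re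

theorem PolySubmeanOn.mono {t : Set ℂ} (hu : PolySubmeanOn u s) (hts : t ⊆ s) :
    PolySubmeanOn u t :=
  fun a r hr hball => hu a r hr (hball.trans hts)

theorem PlurisubharmonicOn.polySubmeanOn (hu : PlurisubharmonicOn (fun z => (u z : EReal)) s) :
    PolySubmeanOn u s := by
  intro a r hr hball p hp
  refine EReal.coe_le_coe_iff.1 (hu.2 a 1 r hr (fun t ht => ?_) p fun t ht => ?_)
  · rw [smul_eq_mul, mul_one]
    exact hball (by simpa [dist_eq_norm] using ht)
  · rw [smul_eq_mul, mul_one]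
    exact EReal.coe_le_coe_iff.2 (hp t ht)

theorem PlurisubharmonicOn.upperSemicontinuousOn
    (hu : PlurisubharmonicOn (fun z => (u z : EReal)) s) : UpperSemicontinuousOn u s :=
  fun x hx y hy => (hu.1 x hx y (EReal.coe_lt_coe_iff.2 hy)).mono fun _ => EReal.coe_lt_coe_iff.1

end PolySubmean

def peakPoly (N : ℕ) : ℂ[X] :=
  ∑ j ∈ Finset.range (2 * N + 1), C ((2 * N).choose j : ℂ) * X ^ Nat.dist j N

theorem peakPoly_eval_zero (N : ℕ) : (peakPoly N).eval 0 = (2 * N).choose N := by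
  rw [peakPoly, eval_finsetSum, Finset.sum_eq_single_of_mem N (by simp; omega)]
  · simp [Nat.dist_self]
  · intro j _ hj
    simp [zero_pow (mt Nat.eq_of_dist_eq_zero hj)]

/-- On the unit circle, `w ^ |j - N|` and `w ^ j * conj w ^ N` have the same real part, so the real
part of `peakPoly N` is that of `(1 + w) ^ (2 * N) * conj w ^ N = |1 + w| ^ (2 * N)`. -/
theorem re_peakPoly_eval {w : ℂ} (hw : ‖w‖ = 1) (N : ℕ) :
    ((peakPoly N).eval w).re = normSq (1 + w) ^ N := by
  have hconj : w * conj w = 1 := by rw [mul_conj, normSq_eq_norm_sq, hw]; norm_num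
  have hterm (j : ℕ) : (w ^ Nat.dist j N).re = (w ^ j * conj w ^ N).re := by
    rcases le_total N j with h | h
    · obtain ⟨k, rfl⟩ := Nat.exists_eq_add_of_le h
      rw [Nat.dist_eq_sub_of_le_right h, Nat.add_sub_cancel_left, pow_add,
        mul_right_comm, ← mul_pow, hconj, one_pow, one_mul]
    · obtain ⟨k, rfl⟩ := Nat.exists_eq_add_of_le h
      rw [Nat.dist_eq_sub_of_le h, Nat.add_sub_cancel_left, pow_add, ← mul_assoc, ← mul_pow,
        hconj, one_pow, one_mul, ← map_pow, conj_re]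
  have hsum : ∑ j ∈ Finset.range (2 * N + 1), ((2 * N).choose j : ℂ) * (w ^ j * conj w ^ N)
      = (normSq (1 + w) : ℂ) ^ N := by
    calc _ = (w + 1) ^ (2 * N) * conj w ^ N := by
          rw [add_pow, Finset.sum_mul]
          exact Finset.sum_congr rfl fun j _ => by ring
      _ = ((1 + w) ^ 2 * conj w) ^ N := by rw [mul_pow, ← pow_mul, add_comm w]
      _ = ((1 + w) * (conj w + w * conj w)) ^ N := by ring
      _ = (normSq (1 + w) : ℂ) ^ N := by
          rw [hconj, ← mul_conj, map_add, map_one, add_comm (conj w)]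
  rw [peakPoly, eval_finsetSum, re_sum, ← ofReal_re (normSq (1 + w) ^ N), ofReal_pow, ← hsum,
    re_sum]
  refine Finset.sum_congr rfl fun j _ => ?_
  simp only [eval_mul, eval_C, eval_pow, eval_X, mul_re, natCast_re, natCast_im, zero_mul,
    sub_zero, hterm]

theorem exists_two_mul_add_one_mul_pow_lt_one {x : ℝ} (hx₀ : 0 ≤ x) (hx₁ : x < 1) :
    ∃ N : ℕ, (2 * N + 1) * x ^ N < 1 := by
  have hx : |x| < 1 := by rwa [abs_of_nonneg hx₀]
  have hlim : Tendsto (fun N : ℕ => (2 * N + 1) * x ^ N) atTop (𝓝 0) := by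
    have := ((tendsto_pow_const_mul_const_pow_of_abs_lt_one 1 hx).const_mul 2).add
      (tendsto_pow_atTop_nhds_zero_of_lt_one hx₀ hx₁)
    simpa [add_mul, mul_assoc] using this
  exact (hlim.eventually (gt_mem_nhds one_pos)).exists

theorem exists_poly_peak_at_one {η : ℝ} (hη : 0 < η) :
    ∃ q : ℂ[X], 0 < (q.eval 0).re ∧
      ∀ w : ℂ, ‖w‖ = 1 → (q.eval w).re ≤ 1 ∧ (η ≤ ‖w - 1‖ → (q.eval w).re ≤ 0) := by
  set x := max 0 (1 - η ^ 2 / 4)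
  have hx₀ : 0 ≤ x := le_max_left _ _
  have hx₁ : x < 1 := max_lt one_pos (by linarith [show 0 < η ^ 2 / 4 by positivity])
  obtain ⟨N, hN⟩ := exists_two_mul_add_one_mul_pow_lt_one hx₀ hx₁
  refine ⟨C ((((4 : ℝ) ^ N)⁻¹ : ℝ) : ℂ) * peakPoly N - C ((x ^ N : ℝ) : ℂ), ?_, fun w hw => ?_⟩
  · have hcentral : (4 : ℝ) ^ N ≤ (2 * N + 1) * (2 * N).choose N := by
      exact_mod_cast Nat.four_pow_le_two_mul_add_one_mul_central_binom N
    have hc : 1 ≤ (2 * N + 1) * (((4 : ℝ) ^ N)⁻¹ * (2 * N).choose N) := by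
      rw [← mul_assoc, mul_comm _ ((4 : ℝ) ^ N)⁻¹, mul_assoc, le_inv_mul_iff₀ (by positivity),
        mul_one]
      exact hcentral
    have : x ^ N < ((4 : ℝ) ^ N)⁻¹ * (2 * N).choose N :=
      lt_of_mul_lt_mul_left (hN.trans_le hc) (by positivity)
    simp only [eval_sub, eval_mul, eval_C, peakPoly_eval_zero, sub_re, re_ofReal_mul, natCast_re,
      ofReal_re]
    linarith
  · have hpara : normSq (1 + w) / 4 = 1 - ‖w - 1‖ ^ 2 / 4 := by
      rw [← normSq_eq_norm_sq, normSq_add, normSq_sub, normSq_one, normSq_eq_norm_sq w, hw]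
      simp; ring
    have hre : (eval w (C ((((4 : ℝ) ^ N)⁻¹ : ℝ) : ℂ) * peakPoly N - C ((x ^ N : ℝ) : ℂ))).re
        = (normSq (1 + w) / 4) ^ N - x ^ N := by
      rw [eval_sub, eval_mul, eval_C, eval_C, sub_re, re_ofReal_mul, ofReal_re,
        re_peakPoly_eval hw, div_pow, inv_mul_eq_div]
    have hy₀ : 0 ≤ normSq (1 + w) / 4 := div_nonneg (normSq_nonneg _) zero_le_four
    rw [hre]
    refine ⟨?_, fun hfar => ?_⟩
    · have : (normSq (1 + w) / 4) ^ N ≤ 1 :=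
        pow_le_one₀ hy₀ (by rw [hpara]; linarith [sq_nonneg ‖w - 1‖])
      linarith [pow_nonneg hx₀ N]
    · have : normSq (1 + w) / 4 ≤ x := by
        rw [hpara]
        refine le_max_of_le_right ?_
        nlinarith
      linarith [pow_le_pow_left₀ hy₀ this N]

theorem exists_poly_peak {ρ η : ℝ} (hρ : 0 < ρ) (hη : 0 < η) {t₀ : ℂ} (ht₀ : ‖t₀‖ = ρ) :
    ∃ q : ℂ[X], 0 < (q.eval 0).re ∧
      ∀ t : ℂ, ‖t‖ = ρ → (q.eval t).re ≤ 1 ∧ (η ≤ ‖t - t₀‖ → (q.eval t).re ≤ 0) := by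
  obtain ⟨q, hq0, hq⟩ := exists_poly_peak_at_one (div_pos hη hρ)
  have ht₀' : t₀ ≠ 0 := norm_pos_iff.1 (ht₀ ▸ hρ)
  have hnorm (t : ℂ) : ‖t₀⁻¹ * t‖ = ‖t‖ / ρ := by rw [norm_mul, norm_inv, ht₀, inv_mul_eq_div]
  refine ⟨q.comp (C t₀⁻¹ * X), by simpa using hq0, fun t ht => ?_⟩
  have hw : ‖t₀⁻¹ * t‖ = 1 := by rw [hnorm, ht, div_self hρ.ne']
  have hdist : ‖t₀⁻¹ * t - 1‖ = ‖t - t₀‖ / ρ := by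
    rw [← inv_mul_cancel₀ ht₀', ← mul_sub, hnorm]
  simp only [eval_comp, eval_mul, eval_C, eval_X]
  refine ⟨(hq _ hw).1, fun hfar => (hq _ hw).2 ?_⟩
  rw [hdist]
  exact div_le_div_of_nonneg_right hfar hρ.le

theorem UpperSemicontinuousOn.isClosed_inter_preimage_Ici_of_frontier {α β : Type*}
    [TopologicalSpace α] [LinearOrder β] {f : α → β} {s : Set α} {c : β}
    (hf : UpperSemicontinuousOn f s) (hfr : ∀ w ∈ frontier s, ∀ᶠ z in 𝓝[s] w, f z < c) :
    IsClosed (s ∩ f ⁻¹' Ici c) := by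
  refine isClosed_of_closure_subset fun z hz => ?_
  have := mem_closure_iff_nhdsWithin_neBot.1 hz
  by_contra hzK
  have hlt : ∀ᶠ y in 𝓝[s] z, f y < c := by
    by_cases hzs : z ∈ s
    · exact hf z hzs c (not_le.1 fun h => hzK ⟨hzs, h⟩)
    · exact hfr z ⟨closure_mono inter_subset_left hz, fun h => hzs (interior_subset h)⟩
  have hlt' := hlt.filter_mono (nhdsWithin_mono z (inter_subset_left (t := f ⁻¹' Ici c)))
  obtain ⟨y, hy, hyK⟩ := (hlt'.and self_mem_nhdsWithin).exists
  exact not_le.2 hy hyK.2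

section MaximumPrinciple

variable {u : ℂ → ℝ} {s : Set ℂ}

/-- A point where `u` is maximal on a disc forces `u` to be constant on the bounding circle: a
polynomial peaking at a point of the circle where `u` is smaller would give a majorant whose value
at the centre is below the maximum. -/
theorem PolySubmeanOn.eq_of_isMaxOn_closedBall (hu : PolySubmeanOn u s)
    (husc : UpperSemicontinuousOn u s) {a : ℂ} {ρ : ℝ} (hρ : 0 < ρ) (hball : closedBall a ρ ⊆ s)
    (hmax : IsMaxOn u (closedBall a ρ) a) {t₀ : ℂ} (ht₀ : ‖t₀‖ = ρ) : u (a + t₀) = u a := by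
  have hsphere (t : ℂ) (ht : ‖t‖ = ρ) : a + t ∈ closedBall a ρ := by
    simp [dist_eq_norm, ht]
  by_contra hne
  have hlt : u (a + t₀) < u a := lt_of_le_of_ne (hmax (hsphere t₀ ht₀)) hne
  set δ := (u a - u (a + t₀)) / 2
  have hδ : 0 < δ := by simp only [δ]; linarith
  obtain ⟨η, hη, hnear⟩ := Metric.mem_nhdsWithin_iff.1
    (husc _ (hball (hsphere t₀ ht₀)) (u a - δ) (by simp only [δ]; linarith))
  obtain ⟨q, hq0, hq⟩ := exists_poly_peak hρ hη ht₀
  have hmaj : ∀ t : ℂ, ‖t‖ = ρ → u (a + t) ≤ ((C (u a : ℂ) - C (δ : ℂ) * q).eval t).re := by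
    intro t ht
    simp only [eval_sub, eval_mul, eval_C, sub_re, ofReal_re, re_ofReal_mul]
    by_cases hfar : η ≤ ‖t - t₀‖
    · have : u (a + t) ≤ u a := hmax (hsphere t ht)
      nlinarith [(hq t ht).2 hfar]
    · have : u (a + t) < u a - δ :=
        hnear ⟨by simpa [dist_eq_norm] using not_le.1 hfar, hball (hsphere t ht)⟩
      nlinarith [(hq t ht).1]
  have := hu a ρ hρ hball _ hmaj
  simp only [eval_sub, eval_mul, eval_C, sub_re, ofReal_re, re_ofReal_mul] at this
  nlinarith

theorem PolySubmeanOn.eqOn_closedBall_of_isMaxOn (hu : PolySubmeanOn u s)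
    (husc : UpperSemicontinuousOn u s) {a : ℂ} {ρ : ℝ} (hball : closedBall a ρ ⊆ s)
    (hmax : IsMaxOn u (closedBall a ρ) a) : ∀ z ∈ closedBall a ρ, u z = u a := by
  intro z hz
  rcases eq_or_ne z a with rfl | hza
  · rfl
  have hsub : closedBall a ‖z - a‖ ⊆ closedBall a ρ :=
    closedBall_subset_closedBall (by simpa [dist_eq_norm] using hz)
  simpa using hu.eq_of_isMaxOn_closedBall husc (norm_pos_iff.2 (sub_ne_zero.2 hza))
    (hsub.trans hball) (hmax.on_subset hsub) rfl

theorem PolySubmeanOn.eqOn_of_isMaxOn (hu : PolySubmeanOn u s) (husc : UpperSemicontinuousOn u s)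
    (hs : IsOpen s) (hconn : IsPreconnected s) {w : ℂ} (hw : w ∈ s) (hmax : IsMaxOn u s w) :
    ∀ z ∈ s, u z = u w := by
  set U := {z ∈ s | u z = u w}
  have hUopen : IsOpen U := by
    refine isOpen_iff_mem_nhds.2 fun z ⟨hzs, hzw⟩ => ?_
    obtain ⟨ρ, hρ, hball⟩ := nhds_basis_closedBall.mem_iff.1 (hs.mem_nhds hzs)
    have hmax' : IsMaxOn u (closedBall z ρ) z := fun y hy => by
      simpa only [hzw] using hmax (hball hy)
    refine Filter.mem_of_superset (closedBall_mem_nhds z hρ) fun y hy => ⟨hball hy, ?_⟩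
    rw [hu.eqOn_closedBall_of_isMaxOn husc hball hmax' y hy, hzw]
  have hclosed : closure U ∩ s ⊆ U := by
    rintro z ⟨hzU, hzs⟩
    refine ⟨hzs, le_antisymm (hmax hzs) (not_lt.1 fun hlt => ?_)⟩
    have hev := husc z hzs (u w) hlt
    rw [nhdsWithin_eq_nhds.2 (hs.mem_nhds hzs)] at hev
    obtain ⟨y, hy, hyU⟩ := mem_closure_iff_nhds.1 hzU _ hev
    exact hy.ne hyU.2
  exact fun z hz => (hconn.subset_of_closure_inter_subset hUopen ⟨w, hw, hw, rfl⟩ hclosed hz).2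

/-- The maximum principle: a maximum above `b` would be attained on the compact set where `u` is
that large, and then `u` would be constant, contradicting the boundary behaviour. -/
theorem PolySubmeanOn.le_of_forall_frontier (hu : PolySubmeanOn u s)
    (husc : UpperSemicontinuousOn u s) (hs : IsOpen s) (hconn : IsPreconnected s)
    (hbdd : Bornology.IsBounded s) {b : ℝ}
    (hfr : ∀ w ∈ frontier s, ∀ ε > 0, ∀ᶠ z in 𝓝[s] w, u z < b + ε) {z₀ : ℂ} (hz₀ : z₀ ∈ s) :
    u z₀ ≤ b := by
  by_contra! hb
  have hfr' : ∀ w ∈ frontier s, ∀ᶠ z in 𝓝[s] w, u z < u z₀ := fun w hw =>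
    (hfr w hw _ (sub_pos.2 hb)).mono fun z hz => by linarith
  have hK : IsCompact (s ∩ u ⁻¹' Ici (u z₀)) :=
    Metric.isCompact_of_isClosed_isBounded (husc.isClosed_inter_preimage_Ici_of_frontier hfr')
      (hbdd.subset inter_subset_left)
  obtain ⟨w, ⟨hws, hwK⟩, hmaxK⟩ :=
    (husc.mono inter_subset_left).exists_isMaxOn (s := s ∩ u ⁻¹' Ici (u z₀)) ⟨z₀, hz₀, by simp⟩ hK
  have hmax : IsMaxOn u s w := fun y hy => by
    by_cases hy' : u z₀ ≤ u y
    · exact hmaxK ⟨hy, hy'⟩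
    · exact (not_le.1 hy').le.trans hwK
  have hconst := hu.eqOn_of_isMaxOn husc hs hconn hws hmax
  obtain ⟨v, hv⟩ : (frontier s).Nonempty :=
    nonempty_frontier_iff.2 ⟨⟨z₀, hz₀⟩, fun h => NormedSpace.unbounded_univ ℝ ℂ (h ▸ hbdd)⟩
  have := mem_closure_iff_nhdsWithin_neBot.1 (frontier_subset_closure hv)
  obtain ⟨y, hy, hys⟩ := ((hfr' v hv).and self_mem_nhdsWithin).exists
  exact not_le.2 hy (hconst y hys ▸ hwK)

end MaximumPrinciple

theorem exists_poly_norm_sub_lt {s : Set ℂ} {F : ℂ → ℂ} (hs : IsOpen s)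
    (hF : DifferentiableOn ℂ F s) {a : ℂ} {r : ℝ} (hr : 0 ≤ r) (hball : closedBall a r ⊆ s)
    {ε : ℝ} (hε : 0 < ε) :
    ∃ q : ℂ[X], q.eval 0 = F a ∧ ∀ t : ℂ, ‖t‖ = r → ‖F (a + t) - q.eval t‖ < ε := by
  obtain ⟨δ, hδ, hsub⟩ := (isCompact_closedBall a r).exists_cthickening_subset_open hs hball
  rw [cthickening_closedBall hδ.le hr] at hsub
  set R : NNReal := ⟨δ + r, by positivity⟩
  set R' : NNReal := ⟨δ / 2 + r, by positivity⟩
  have hRR' : R' < R := show δ / 2 + r < δ + r by linarith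
  have hps := (hF.mono hsub).hasFPowerSeriesOnBall (R := R) (pos_of_gt hRR')
  set P := cauchyPowerSeries F a R
  have hunif := hps.tendstoUniformlyOn (ENNReal.coe_lt_coe.2 hRR')
  obtain ⟨n, hn⟩ :=
    (Metric.tendstoUniformlyOn_iff.1 hunif ε hε |>.and (eventually_ge_atTop 1)).exists
  have heval (t : ℂ) :
      (∑ k ∈ Finset.range n, C (P.coeff k) * X ^ k).eval t = P.partialSum n t := by
    rw [eval_finsetSum, FormalMultilinearSeries.partialSum]
    refine Finset.sum_congr rfl fun k _ => ?_
    rw [eval_mul, eval_C, eval_pow, eval_X, P.apply_eq_pow_smul_coeff, smul_eq_mul, mul_comm]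
  refine ⟨∑ k ∈ Finset.range n, C (P.coeff k) * X ^ k, ?_, fun t ht => ?_⟩
  · obtain ⟨m, rfl⟩ := Nat.exists_eq_add_of_le' hn.2
    rw [← coeff_zero_eq_eval_zero, finsetSum_coeff]
    simp only [coeff_C_mul_X_pow, Finset.sum_ite_eq, Finset.mem_range, Nat.zero_lt_succ, if_true]
    exact hps.coeff_zero _
  · rw [heval, ← dist_eq_norm]
    exact hn.1 t (mem_ball_zero_iff.2 (show ‖t‖ < δ / 2 + r by linarith))

theorem PolySubmeanOn.add_re {u : ℂ → ℝ} {s : Set ℂ} {F : ℂ → ℂ} (hu : PolySubmeanOn u s)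
    (hs : IsOpen s) (hF : DifferentiableOn ℂ F s) : PolySubmeanOn (fun z => u z + (F z).re) s := by
  intro a r hr hball p hp
  dsimp only at hp ⊢
  refine le_of_forall_pos_le_add fun ε hε => ?_
  obtain ⟨q, hq0, hq⟩ := exists_poly_norm_sub_lt hs hF hr.le hball hε
  have hmaj : ∀ t : ℂ, ‖t‖ = r → u (a + t) ≤ ((p - q + C (ε : ℂ)).eval t).re := by
    intro t ht
    have hclose : (q.eval t - F (a + t)).re < ε :=
      (re_le_norm _).trans_lt (norm_sub_rev (F (a + t)) _ ▸ hq t ht)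
    simp only [eval_add, eval_sub, eval_C, Complex.add_re, Complex.sub_re, ofReal_re] at hclose ⊢
    linarith [hp t ht]
  have := hu a r hr hball _ hmaj
  simp only [eval_add, eval_sub, eval_C, Complex.add_re, Complex.sub_re, ofReal_re, hq0] at this
  linarith

theorem re_le_zero_of_forall_norm_eq {f : ℂ → ℂ} {r : ℝ} (hr : 0 < r)
    (hf : DifferentiableOn ℂ f (closedBall 0 r)) (h : ∀ t : ℂ, ‖t‖ = r → (f t).re ≤ 0) :
    (f 0).re ≤ 0 := by
  have hexp : DiffContOnCl ℂ (fun t => exp (f t)) (ball 0 r) := hf.cexp.diffContOnCl_ball subset_rfl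
  have := norm_le_of_forall_mem_frontier_norm_le isBounded_ball hexp (C := 1) (fun t ht => ?_)
    (subset_closure (mem_ball_self hr))
  · rwa [norm_exp, Real.exp_le_one_iff] at this
  · rw [frontier_ball 0 hr.ne', mem_sphere_zero_iff_norm] at ht
    rw [norm_exp, Real.exp_le_one_iff]
    exact h t ht

theorem plurisubharmonicOn_abs_re {G : ℂ → ℂ} {s : Set ℂ} (hG : DifferentiableOn ℂ G s) :
    PlurisubharmonicOn (fun z => ((|(G z).re| : ℝ) : EReal)) s := by
  refine ⟨(continuous_coe_real_ereal.comp_continuousOn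
    (continuous_re.comp_continuousOn hG.continuousOn).abs).upperSemicontinuousOn, ?_⟩
  intro a v r hr hline p hp
  simp only [EReal.coe_le_coe_iff, smul_eq_mul] at hp hline ⊢
  have key (H : ℂ → ℂ) (hH : DifferentiableOn ℂ H s)
      (hHp : ∀ t : ℂ, ‖t‖ = r → (H (a + t * v)).re ≤ (p.eval t).re) :
      (H a).re ≤ (p.eval 0).re := by
    have hd : DifferentiableOn ℂ (fun t => H (a + t * v) - p.eval t) (closedBall 0 r) :=
      (hH.comp (by fun_prop) fun t ht => hline t (mem_closedBall_zero_iff.1 ht)).sub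
        p.differentiable.differentiableOn
    simpa using re_le_zero_of_forall_norm_eq hr hd fun t ht => by simpa using hHp t ht
  have hpos := key G hG fun t ht => (le_abs_self _).trans (hp t ht)
  have hneg := key (-G) hG.neg fun t ht => by simpa using (neg_le_abs _).trans (hp t ht)
  simp only [Pi.neg_apply, neg_re] at hneg
  exact abs_le.2 ⟨by linarith, hpos⟩

def cayley (z : ℂ) : ℂ := (1 + z) / (1 - z)

def intervalExtremal (z : ℂ) : ℝ := 2 / π * |arg (cayley z)|

theorem re_cayley (z : ℂ) : (cayley z).re = (1 - normSq z) / normSq (1 - z) := by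
  rw [cayley, div_re]
  simp only [Complex.add_re, Complex.add_im, Complex.sub_re, Complex.sub_im, one_re, one_im,
    normSq_apply]
  ring

theorem im_cayley (z : ℂ) : (cayley z).im = 2 * z.im / normSq (1 - z) := by
  rw [cayley, div_im]
  simp only [Complex.add_re, Complex.add_im, Complex.sub_re, Complex.sub_im, one_re, one_im,
    normSq_apply]
  ring

theorem differentiableAt_cayley {z : ℂ} (hz : z ≠ 1) : DifferentiableAt ℂ cayley z :=
  ((differentiableAt_const 1).add differentiableAt_id).div
    ((differentiableAt_const 1).sub differentiableAt_id) (sub_ne_zero.2 hz.symm)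

theorem ne_one_of_norm_lt_one {z : ℂ} (hz : ‖z‖ < 1) : z ≠ 1 := by
  rintro rfl
  simp at hz

theorem re_cayley_pos {z : ℂ} (hz : ‖z‖ < 1) : 0 < (cayley z).re := by
  rw [re_cayley, normSq_eq_norm_sq]
  exact div_pos (by nlinarith [norm_nonneg z])
    (normSq_pos.2 (sub_ne_zero.2 (ne_one_of_norm_lt_one hz).symm))

theorem differentiableOn_log_cayley :
    DifferentiableOn ℂ (fun z => log (cayley z)) (ball 0 1) := by
  intro z hz
  rw [mem_ball_zero_iff] at hz
  exact ((differentiableAt_log (mem_slitPlane_iff.2 (Or.inl (re_cayley_pos hz)))).comp z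
    (differentiableAt_cayley (ne_one_of_norm_lt_one hz))).differentiableWithinAt

theorem re_neg_mul_I_mul_log (c : ℝ) (w : ℂ) : (-(c * I) * log w).re = c * arg w := by
  simp [log_im]

theorem intervalExtremal_eq_abs_re (z : ℂ) :
    intervalExtremal z = |(-(((2 / π : ℝ) : ℂ) * I) * log (cayley z)).re| := by
  rw [re_neg_mul_I_mul_log, abs_mul, abs_of_pos (by positivity : (0 : ℝ) < 2 / π), intervalExtremal]

theorem intervalExtremal_nonneg (z : ℂ) : 0 ≤ intervalExtremal z := by
  unfold intervalExtremal
  positivity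

theorem intervalExtremal_le_one {z : ℂ} (hz : ‖z‖ < 1) : intervalExtremal z ≤ 1 := by
  have harg : |arg (cayley z)| ≤ π / 2 := abs_arg_le_pi_div_two_iff.2 (re_cayley_pos hz).le
  calc intervalExtremal z ≤ 2 / π * (π / 2) := by unfold intervalExtremal; gcongr
    _ = 1 := by field_simp

theorem intervalExtremal_eq_zero {z : ℂ} (hz : z.im = 0 ∧ -1 < z.re ∧ z.re < 1) :
    intervalExtremal z = 0 := by
  obtain ⟨him, hlo, hhi⟩ := hz
  have hreal : cayley z = ((1 + z.re) / (1 - z.re) : ℝ) := by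
    rw [cayley]
    conv_lhs => rw [← re_add_im z, him]
    push_cast
    ring
  rw [intervalExtremal, hreal, arg_ofReal_of_nonneg (div_nonneg (by linarith) (by linarith))]
  simp

theorem plurisubharmonicOn_intervalExtremal :
    PlurisubharmonicOn (fun z => (intervalExtremal z : EReal)) (ball 0 1) := by
  simp only [intervalExtremal_eq_abs_re]
  exact plurisubharmonicOn_abs_re (differentiableOn_log_cayley.const_mul _)

theorem intervalExtremal_eq_mul_re {σ : ℝ} (hσ : σ = 1 ∨ σ = -1) {z : ℂ} (hz : ‖z‖ < 1)
    (hσz : 0 < σ * z.im) :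
    intervalExtremal z = σ * (-(((2 / π : ℝ) : ℂ) * I) * log (cayley z)).re := by
  have hden : 0 < normSq (1 - z) := normSq_pos.2 (sub_ne_zero.2 (ne_one_of_norm_lt_one hz).symm)
  rw [re_neg_mul_I_mul_log, intervalExtremal]
  rcases hσ with rfl | rfl
  · have : 0 ≤ (cayley z).im := by rw [im_cayley]; exact div_nonneg (by linarith) hden.le
    rw [abs_of_nonneg (arg_nonneg_iff.2 this), one_mul]
  · have : (cayley z).im < 0 := by rw [im_cayley]; exact div_neg_of_neg_of_pos (by linarith) hden
    rw [abs_of_neg (arg_neg_iff.2 this)]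
    ring

theorem tendsto_intervalExtremal_of_norm_eq_one {w : ℂ} (hw : ‖w‖ = 1) (him : w.im ≠ 0) :
    Tendsto intervalExtremal (𝓝 w) (𝓝 1) := by
  have hw1 : w ≠ 1 := by rintro rfl; simp at him
  have hre : (cayley w).re = 0 := by rw [re_cayley, normSq_eq_norm_sq, hw]; simp
  have him' : (cayley w).im ≠ 0 := by
    rw [im_cayley]
    exact div_ne_zero (mul_ne_zero two_ne_zero him)
      (normSq_pos.2 (sub_ne_zero.2 hw1.symm)).ne'
  have hcont : ContinuousAt intervalExtremal w :=
    continuousAt_const.mul ((continuousAt_arg (mem_slitPlane_iff.2 (Or.inr him'))).comp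
      (differentiableAt_cayley hw1).continuousAt).abs
  have harg : |arg (cayley w)| = π / 2 :=
    le_antisymm (abs_arg_le_pi_div_two_iff.2 hre.ge) (not_lt.1 fun h => by
      rcases abs_arg_lt_pi_div_two_iff.1 h with h | h
      · exact h.ne' hre
      · exact him' (by simp [h]))
  have hval : intervalExtremal w = 1 := by
    rw [intervalExtremal, harg]
    field_simp
  simpa [hval] using hcont.tendsto

theorem one_sub_sq_div_two_mem_slitPlane {z : ℂ} (hz : ‖z‖ < 1) : (1 - z ^ 2) / 2 ∈ slitPlane := by
  refine mem_slitPlane_iff.2 (Or.inl ?_)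
  have : (z ^ 2).re < 1 := (re_le_norm _).trans_lt (by rw [norm_pow]; nlinarith [norm_nonneg z])
  simp only [div_ofNat_re, Complex.sub_re, one_re]
  linarith

theorem log_norm_one_sub_sq_div_two_nonpos {z : ℂ} (hz : ‖z‖ ≤ 1) :
    Real.log ‖(1 - z ^ 2) / 2‖ ≤ 0 := by
  refine Real.log_nonpos (norm_nonneg _) ?_
  rw [norm_div, div_le_one (by norm_num)]
  calc ‖1 - z ^ 2‖ ≤ ‖(1 : ℂ)‖ + ‖z‖ ^ 2 := by rw [← norm_pow]; exact norm_sub_le _ _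
    _ ≤ ‖(2 : ℂ)‖ := by norm_num; nlinarith [norm_nonneg z]

theorem tendsto_log_norm_one_sub_sq_div_two {w : ℂ} (hw : w ^ 2 = 1) :
    Tendsto (fun z => Real.log ‖(1 - z ^ 2) / 2‖) (𝓝[ball 0 1] w) atBot := by
  refine Real.tendsto_log_nhdsNE_zero.comp (tendsto_nhdsWithin_iff.2 ⟨?_, ?_⟩)
  · have : Continuous fun z : ℂ => ‖(1 - z ^ 2) / 2‖ := by fun_prop
    simpa [hw] using (this.tendsto w).mono_left (nhdsWithin_le_nhds (s := ball 0 1))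
  · filter_upwards [self_mem_nhdsWithin] with z hz
    exact norm_ne_zero_iff.2 (slitPlane_ne_zero (one_sub_sq_div_two_mem_slitPlane
      (mem_ball_zero_iff.1 hz)))

theorem frontier_ball_inter_halfPlane_subset {σ : ℝ} (hσ : σ ≠ 0) :
    frontier (ball (0 : ℂ) 1 ∩ {z | 0 < σ * z.im}) ⊆ {w | ‖w‖ ≤ 1 ∧ (‖w‖ = 1 ∨ w.im = 0)} := by
  have hopen : IsOpen (ball (0 : ℂ) 1 ∩ {z | 0 < σ * z.im}) :=
    isOpen_ball.inter (isOpen_lt continuous_const (by fun_prop))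
  have hcl : closure (ball (0 : ℂ) 1 ∩ {z | 0 < σ * z.im}) ⊆ closedBall 0 1 ∩ {z | 0 ≤ σ * z.im} :=
    closure_minimal (inter_subset_inter ball_subset_closedBall fun z (hz : 0 < σ * z.im) => hz.le)
      (isClosed_closedBall.inter (isClosed_le continuous_const (by fun_prop)))
  rintro w hw
  rw [hopen.frontier_eq] at hw
  obtain ⟨hw1, hwσ⟩ := hcl hw.1
  rw [mem_closedBall_zero_iff] at hw1
  refine ⟨hw1, ?_⟩
  by_contra! h
  exact hw.2 ⟨mem_ball_zero_iff.2 (lt_of_le_of_ne hw1 h.1),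
    lt_of_le_of_ne hwσ (Ne.symm (mul_ne_zero hσ h.2))⟩

section Competitor

variable {u : ℂ → ℝ}

theorem eventually_sub_intervalExtremal_add_log_lt (husc : UpperSemicontinuousOn u (ball 0 1))
    (hle1 : ∀ z ∈ ball (0 : ℂ) 1, u z ≤ 1)
    (hle0 : ∀ z ∈ {z : ℂ | z.im = 0 ∧ -1 < z.re ∧ z.re < 1}, u z ≤ 0) {ε : ℝ} (hε : 0 < ε)
    {w : ℂ} (hw : ‖w‖ ≤ 1) (hbd : ‖w‖ = 1 ∨ w.im = 0) {ε' : ℝ} (hε' : 0 < ε') :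
    ∀ᶠ z in 𝓝[ball 0 1] w,
      u z - intervalExtremal z + ε * Real.log ‖(1 - z ^ 2) / 2‖ < ε' := by
  have hbarrier : ∀ᶠ z in 𝓝[ball 0 1] w, ε * Real.log ‖(1 - z ^ 2) / 2‖ ≤ 0 :=
    eventually_nhdsWithin_of_forall fun z hz =>
      mul_nonpos_of_nonneg_of_nonpos hε.le
        (log_norm_one_sub_sq_div_two_nonpos (mem_ball_zero_iff.1 hz).le)
  have hmem : ∀ᶠ z in 𝓝[ball 0 1] w, z ∈ ball (0 : ℂ) 1 := self_mem_nhdsWithin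
  by_cases hw2 : w ^ 2 = 1
  · -- at `±1` the logarithmic term tends to `-∞`
    have := ((tendsto_log_norm_one_sub_sq_div_two hw2).const_mul_atBot hε).eventually
      (eventually_lt_atBot (ε' - 1))
    filter_upwards [this, hmem] with z hz hzD
    linarith [hle1 z hzD, intervalExtremal_nonneg z]
  rcases eq_or_ne w.im 0 with him | him
  · have hw1 : ‖w‖ < 1 := by
      refine lt_of_le_of_ne hw fun h => hw2 ?_
      have hsq : w.re * w.re = 1 := by
        simpa [normSq_apply, him, normSq_eq_norm_sq, h] using (normSq_eq_norm_sq w)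
      apply Complex.ext <;> simp [sq, him, hsq]
    have hwA : w.im = 0 ∧ -1 < w.re ∧ w.re < 1 :=
      ⟨him, abs_lt.1 ((abs_re_le_norm w).trans_lt hw1)⟩
    have := husc w (mem_ball_zero_iff.2 hw1) ε' ((hle0 w hwA).trans_lt hε')
    filter_upwards [this, hbarrier] with z hz hzb
    linarith [intervalExtremal_nonneg z]
  · -- elsewhere on the circle `intervalExtremal` tends to `1`
    have := (tendsto_intervalExtremal_of_norm_eq_one (hbd.resolve_right him) him).eventually
      (lt_mem_nhds (show 1 - ε' < 1 by linarith))
    filter_upwards [this.filter_mono nhdsWithin_le_nhds, hbarrier, hmem] with z hz hzb hzD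
    linarith [hle1 z hzD]

/-- On the half-disc where `intervalExtremal` is the real part of a holomorphic function, the
maximum principle applies to `u - intervalExtremal` plus a small logarithmic pole at `±1`. -/
theorem sub_intervalExtremal_add_log_nonpos
    (hu : PlurisubharmonicOn (fun z => (u z : EReal)) (ball 0 1))
    (hle1 : ∀ z ∈ ball (0 : ℂ) 1, u z ≤ 1)
    (hle0 : ∀ z ∈ {z : ℂ | z.im = 0 ∧ -1 < z.re ∧ z.re < 1}, u z ≤ 0) {ε : ℝ} (hε : 0 < ε)
    {σ : ℝ} (hσ : σ = 1 ∨ σ = -1) {ζ : ℂ} (hζ : ‖ζ‖ < 1) (hσζ : 0 < σ * ζ.im) :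
    u ζ - intervalExtremal ζ + ε * Real.log ‖(1 - ζ ^ 2) / 2‖ ≤ 0 := by
  set Ω := ball (0 : ℂ) 1 ∩ {z | 0 < σ * z.im}
  set F : ℂ → ℂ := fun z =>
    ((-σ : ℝ) : ℂ) * (-(((2 / π : ℝ) : ℂ) * I) * log (cayley z)) + ε * log ((1 - z ^ 2) / 2)
  have hF : DifferentiableOn ℂ F (ball 0 1) := by
    refine ((differentiableOn_log_cayley.const_mul _).const_mul _).add
      (DifferentiableOn.const_mul (fun z hz => ?_) _)
    exact ((differentiableAt_log (one_sub_sq_div_two_mem_slitPlane (mem_ball_zero_iff.1 hz))).comp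
      (f := fun z : ℂ => (1 - z ^ 2) / 2) z (by fun_prop)).differentiableWithinAt
  have hFre : ∀ z ∈ Ω,
      u z + (F z).re = u z - intervalExtremal z + ε * Real.log ‖(1 - z ^ 2) / 2‖ := by
    rintro z ⟨hz, hσz⟩
    rw [intervalExtremal_eq_mul_re hσ (mem_ball_zero_iff.1 hz) hσz]
    simp only [F, Complex.add_re, re_ofReal_mul, log_re]
    ring
  have hΩ : IsOpen Ω := isOpen_ball.inter (isOpen_lt continuous_const (by fun_prop))
  have hΩconn : IsPreconnected Ω := ((convex_ball 0 1).inter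
    (convex_halfSpace_gt (f := fun z : ℂ => σ * z.im) ⟨fun x y => by simp [mul_add],
      fun c x => by simp; ring⟩ 0)).isPreconnected
  have husc : UpperSemicontinuousOn (fun z => u z + (F z).re) Ω :=
    (hu.upperSemicontinuousOn.add
      (continuous_re.comp_continuousOn hF.continuousOn).upperSemicontinuousOn).mono
      inter_subset_left
  have hfr : ∀ w ∈ frontier Ω, ∀ ε' > 0, ∀ᶠ z in 𝓝[Ω] w, u z + (F z).re < 0 + ε' := by
    intro w hw ε' hε'
    obtain ⟨hw1, hbd⟩ :=
      frontier_ball_inter_halfPlane_subset (by rcases hσ with rfl | rfl <;> norm_num) hw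
    filter_upwards [(eventually_sub_intervalExtremal_add_log_lt hu.upperSemicontinuousOn hle1 hle0
      hε hw1 hbd hε').filter_mono (nhdsWithin_mono w inter_subset_left), self_mem_nhdsWithin]
      with z hz hzΩ
    rwa [hFre z hzΩ, zero_add]
  have hζΩ : ζ ∈ Ω := ⟨mem_ball_zero_iff.2 hζ, hσζ⟩
  rw [← hFre ζ hζΩ]
  exact ((hu.polySubmeanOn.add_re isOpen_ball hF).mono inter_subset_left).le_of_forall_frontier
    husc hΩ hΩconn (isBounded_ball.subset inter_subset_left) hfr hζΩ

theorem le_intervalExtremal (hu : PlurisubharmonicOn (fun z => (u z : EReal)) (ball 0 1))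
    (hle1 : ∀ z ∈ ball (0 : ℂ) 1, u z ≤ 1)
    (hle0 : ∀ z ∈ {z : ℂ | z.im = 0 ∧ -1 < z.re ∧ z.re < 1}, u z ≤ 0) {ζ : ℂ}
    (hζ : ζ ∈ ball (0 : ℂ) 1) : u ζ ≤ intervalExtremal ζ := by
  rw [mem_ball_zero_iff] at hζ
  rcases eq_or_ne ζ.im 0 with him | him
  · exact (hle0 ζ ⟨him, abs_lt.1 ((abs_re_le_norm ζ).trans_lt hζ)⟩).trans
      (intervalExtremal_nonneg ζ)
  obtain ⟨σ, hσ, hσζ⟩ : ∃ σ : ℝ, (σ = 1 ∨ σ = -1) ∧ 0 < σ * ζ.im := by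
    rcases him.lt_or_gt with h | h
    · exact ⟨-1, Or.inr rfl, by linarith⟩
    · exact ⟨1, Or.inl rfl, by linarith⟩
  have hlim : Tendsto (fun ε => u ζ - intervalExtremal ζ + ε * Real.log ‖(1 - ζ ^ 2) / 2‖)
      (𝓝[>] 0) (𝓝 (u ζ - intervalExtremal ζ)) := by
    have : Continuous fun ε => u ζ - intervalExtremal ζ + ε * Real.log ‖(1 - ζ ^ 2) / 2‖ := by
      fun_prop
    simpa using (this.tendsto 0).mono_left nhdsWithin_le_nhds
  have := le_of_tendsto hlim (eventually_nhdsWithin_of_forall fun ε hε =>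
    sub_intervalExtremal_add_log_nonpos hu hle1 hle0 hε hσ hζ hσζ)
  linarith

end Competitor

/-- For the unit disc `D ⊂ ℂ` and `A = (-1,1) ⊂ D`, the relative
extremal function satisfies `h_{A,D}(ζ) = (2/π)|Arg((1+ζ)/(1-ζ))|` on `D`. -/
theorem relExtremal_interval_unitDisc :
    ∀ ζ ∈ Metric.ball (0 : ℂ) 1,
      relExtremal {z : ℂ | z.im = 0 ∧ -1 < z.re ∧ z.re < 1} (Metric.ball (0 : ℂ) 1) ζ =
        (2 / Real.pi) * |Complex.arg ((1 + ζ) / (1 - ζ))| := by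
  intro ζ hζ
  refine IsGreatest.csSup_eq ⟨⟨intervalExtremal, ⟨plurisubharmonicOn_intervalExtremal,
    fun z hz => intervalExtremal_le_one (mem_ball_zero_iff.1 hz),
    fun z hz => (intervalExtremal_eq_zero hz).le⟩, rfl⟩, ?_⟩
  rintro _ ⟨u, ⟨hu, hle1, hle0⟩, rfl⟩
  exact le_intervalExtremal hu hle1 hle0 hζ
end
end

section
/- Let A₁ = A₂ = A₃ = (-1,1), D₁ = D₂ = D₃ = the unit disc in ℂ, and let w = i/√3. Then the point z = (0, w, w) satisfies h_{A₁×A₂, D₁×D₂}(0,w) + h_{A₃,D₃}(w) ≥ 1, i.e. z does not belong to {z ∈ D₁×D₂×D₃ : max{h_{A₁,D₁}(z₁), h_{A₂,D₂}(z₂)} + h_{A₃,D₃}(z₃) < 1}, even though z belongs to the (3,2)-cross X_{3,2} = ∪_{|α|=2} X_α where X_{j,1} = D_j and X_{j,0} = A_j. -/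
open Set Filter Topology

noncomputable section

/-! The map `ζ ↦ -(2i/π) log ((1 + ζ) / (1 - ζ))` sends the unit disc conformally onto the strip
`|Re| < 1` and `(-1, 1)` into `iℝ`, so its real part `(2/π) arg ((1 + ζ) / (1 - ζ))` is a
competitor for `h_{(-1,1),𝔻}`; real parts of holomorphic maps are plurisubharmonic by the mean
value property on circles. Since `(1 + w) / (1 - w) = e^{iπ/3}` for `w = i/√3`, this gives
`h(w) ≥ 2/3`. On the bidisc, the average of the two coordinate competitors is admissible for
`h_{A×A,D×D}`, giving `h(0, w) ≥ 1/3`; hence both sums in question are at least `1`. -/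

open Complex Metric Real

theorem DifferentiableOn.re_le_of_forall_mem_sphere {f : ℂ → ℂ} {c : ℂ} {R C : ℝ} (hR : 0 ≤ R)
    (hf : DifferentiableOn ℂ f (closedBall c R)) (hC : ∀ z ∈ sphere c R, (f z).re ≤ C) :
    (f c).re ≤ C := by
  have hR' : |R| = R := abs_of_nonneg hR
  have hint : CircleIntegrable f c R :=
    (hf.continuousOn.mono sphere_subset_closedBall).circleIntegrable hR
  calc (f c).re = (circleAverage f c R).re := by
        rw [(hf.diffContOnCl_ball (by rw [hR'])).circleAverage]
     _ = circleAverage (re ∘ f) c R := (reCLM.circleAverage_comp_comm hint).symm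
     _ ≤ C := circleAverage_mono_on_of_le_circle (reCLM.continuous.comp_continuousOn
        (hf.continuousOn.mono sphere_subset_closedBall) |>.circleIntegrable hR) (by rwa [hR'])

theorem DifferentiableOn.plurisubharmonicOn_re {E : Type*} [NormedAddCommGroup E]
    [NormedSpace ℂ E] {F : E → ℂ} {s : Set E} (hF : DifferentiableOn ℂ F s) (hs : IsOpen s) :
    PlurisubharmonicOn (fun z => (((F z).re : ℝ) : EReal)) s := by
  refine ⟨(continuous_coe_real_ereal.comp_continuousOn
    (continuous_re.comp_continuousOn hF.continuousOn)).upperSemicontinuousOn, ?_⟩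
  intro a v r hr hline p hp
  have hg : DifferentiableOn ℂ (fun t : ℂ => F (a + t • v) - p.eval t) (closedBall 0 r) := by
    intro t ht
    have hts : a + t • v ∈ s := hline t (by simpa using ht)
    exact (((hF.differentiableAt (hs.mem_nhds hts)).comp t (by fun_prop)).sub
      p.differentiable.differentiableAt).differentiableWithinAt
  have := hg.re_le_of_forall_mem_sphere hr.le (C := 0) fun t ht => by
    have := hp t (by simpa using ht)
    rw [EReal.coe_le_coe_iff] at this
    simpa using this
  simpa using this

def discToStrip (ζ : ℂ) : ℂ := ((2 / π : ℝ) : ℂ) * (-I * log ((1 + ζ) / (1 - ζ)))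

theorem re_discToStrip (ζ : ℂ) : (discToStrip ζ).re = 2 / π * arg ((1 + ζ) / (1 - ζ)) := by
  simp [discToStrip, log_im]

theorem re_one_add_div_one_sub_pos {ζ : ℂ} (hζ : ‖ζ‖ < 1) : 0 < ((1 + ζ) / (1 - ζ)).re := by
  have hne : 1 - ζ ≠ 0 := sub_ne_zero.2 fun h => by simp [← h] at hζ
  have hnum : (1 + ζ).re * (1 - ζ).re + (1 + ζ).im * (1 - ζ).im = 1 - normSq ζ := by
    simp only [add_re, sub_re, one_re, add_im, sub_im, one_im, normSq_apply]
    ring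
  have hnormSq : normSq ζ < 1 := by
    rw [normSq_eq_norm_sq]
    nlinarith [norm_nonneg ζ]
  rw [div_re, ← add_div, hnum]
  exact div_pos (by linarith) (normSq_pos.2 hne)

theorem differentiableOn_discToStrip : DifferentiableOn ℂ discToStrip (ball 0 1) := by
  intro ζ hζ
  rw [mem_ball_zero_iff] at hζ
  have hne : 1 - ζ ≠ 0 := sub_ne_zero.2 fun h => by simp [← h] at hζ
  have hslit : (1 + ζ) / (1 - ζ) ∈ slitPlane := Or.inl (re_one_add_div_one_sub_pos hζ)
  have hq : DifferentiableAt ℂ (fun ζ : ℂ => (1 + ζ) / (1 - ζ)) ζ := by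
    fun_prop (disch := exact hne)
  exact (((differentiableAt_log hslit).comp ζ hq).const_mul _ |>.const_mul _).differentiableWithinAt

theorem re_discToStrip_le_one {ζ : ℂ} (hζ : ‖ζ‖ < 1) : (discToStrip ζ).re ≤ 1 := by
  have harg : |arg ((1 + ζ) / (1 - ζ))| < π / 2 :=
    abs_arg_lt_pi_div_two_iff.2 (Or.inl (re_one_add_div_one_sub_pos hζ))
  rw [re_discToStrip, div_mul_eq_mul_div, div_le_one pi_pos]
  linarith [(abs_lt.1 harg).2]

theorem re_discToStrip_eq_zero {ζ : ℂ} (hζ : ‖ζ‖ < 1) (him : ζ.im = 0) :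
    (discToStrip ζ).re = 0 := by
  have hq : ((1 + ζ) / (1 - ζ)).im = 0 := by simp [div_im, him]
  rw [re_discToStrip, arg_eq_zero_iff.2 ⟨(re_one_add_div_one_sub_pos hζ).le, hq⟩, mul_zero]

theorem norm_I_div_sqrt_three : ‖I / ((√3 : ℝ) : ℂ)‖ < 1 := by
  have h3 : 1 < √3 := by rw [lt_sqrt zero_le_one]; norm_num
  rw [norm_div, norm_I, norm_real, norm_of_nonneg (sqrt_nonneg 3), div_lt_one (by positivity)]
  exact h3

theorem re_discToStrip_I_div_sqrt_three : (discToStrip (I / ((√3 : ℝ) : ℂ))).re = 2 / 3 := by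
  have hs : ((√3 : ℝ) : ℂ) ^ 2 = 3 := by norm_cast; simp
  have hs0 : ((√3 : ℝ) : ℂ) ≠ 0 := by norm_cast; positivity
  have hne : 1 - I / ((√3 : ℝ) : ℂ) ≠ 0 := sub_ne_zero.2 fun h => by
    simpa [← h] using norm_I_div_sqrt_three
  have hq : (1 + I / ((√3 : ℝ) : ℂ)) / (1 - I / ((√3 : ℝ) : ℂ))
      = Complex.cos (π / 3 : ℝ) + Complex.sin (π / 3 : ℝ) * I := by
    rw [← ofReal_cos, ← ofReal_sin, cos_pi_div_three, sin_pi_div_three, div_eq_iff hne]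
    push_cast
    field_simp
    linear_combination (-I) * hs + ((√3 : ℝ) : ℂ) * I_sq
  have hmem : π / 3 ∈ Ioc (-π) π := ⟨by linarith [pi_pos], by linarith [pi_pos]⟩
  rw [re_discToStrip, hq, arg_cos_add_sin_mul_I hmem]
  field_simp

theorem le_relExtremal {E : Type*} [NormedAddCommGroup E] [NormedSpace ℂ E]
    {A D : Set E} {u : E → ℝ} (hu : PlurisubharmonicOn (fun w => ((u w : ℝ) : EReal)) D)
    (hu₁ : ∀ w ∈ D, u w ≤ 1) (hu₀ : ∀ w ∈ A, u w ≤ 0) {z : E} (hz : z ∈ D) :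
    u z ≤ relExtremal A D z :=
  le_csSup ⟨1, by rintro _ ⟨v, ⟨-, hv₁, -⟩, rfl⟩; exact hv₁ z hz⟩ ⟨u, ⟨hu, hu₁, hu₀⟩, rfl⟩

def unitSegment : Set ℂ := {z : ℂ | z.im = 0 ∧ -1 < z.re ∧ z.re < 1}

theorem norm_lt_one_of_mem_unitSegment {ζ : ℂ} (hζ : ζ ∈ unitSegment) : ‖ζ‖ < 1 := by
  obtain ⟨him, h₁, h₂⟩ := hζ
  rw [← re_add_im ζ, him, ofReal_zero, zero_mul, add_zero, norm_real, norm_eq_abs]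
  exact abs_lt.2 ⟨h₁, h₂⟩

theorem re_discToStrip_le_relExtremal {ζ : ℂ} (hζ : ζ ∈ ball (0 : ℂ) 1) :
    (discToStrip ζ).re ≤ relExtremal unitSegment (ball 0 1) ζ :=
  le_relExtremal (differentiableOn_discToStrip.plurisubharmonicOn_re isOpen_ball)
    (fun _ hw => re_discToStrip_le_one (mem_ball_zero_iff.1 hw))
    (fun _ hw => (re_discToStrip_eq_zero (norm_lt_one_of_mem_unitSegment hw) hw.1).le) hζ

theorem re_discToStrip_add_le_relExtremal_prod {z : ℂ × ℂ}
    (hz : z ∈ ball (0 : ℂ) 1 ×ˢ ball (0 : ℂ) 1) :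
    ((discToStrip z.1).re + (discToStrip z.2).re) / 2 ≤
      relExtremal (unitSegment ×ˢ unitSegment) (ball 0 1 ×ˢ ball 0 1) z := by
  have h₁ : DifferentiableOn ℂ (fun z : ℂ × ℂ => discToStrip z.1) (ball 0 1 ×ˢ ball 0 1) :=
    differentiableOn_discToStrip.comp differentiableOn_fst fun _ h => h.1
  have h₂ : DifferentiableOn ℂ (fun z : ℂ × ℂ => discToStrip z.2) (ball 0 1 ×ˢ ball 0 1) :=
    differentiableOn_discToStrip.comp differentiableOn_snd fun _ h => h.2
  have hF : DifferentiableOn ℂ (fun z : ℂ × ℂ => (discToStrip z.1 + discToStrip z.2) / 2)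
      (ball 0 1 ×ˢ ball 0 1) :=
    (h₁.fun_add h₂).mul_const (2⁻¹ : ℂ)
  have hu₁ : ∀ w ∈ ball (0 : ℂ) 1 ×ˢ ball (0 : ℂ) 1,
      ((discToStrip w.1 + discToStrip w.2) / 2).re ≤ 1 := by
    rintro w ⟨hw₁, hw₂⟩
    rw [div_ofNat_re, add_re]
    linarith [re_discToStrip_le_one (mem_ball_zero_iff.1 hw₁),
      re_discToStrip_le_one (mem_ball_zero_iff.1 hw₂)]
  have hu₀ : ∀ w ∈ unitSegment ×ˢ unitSegment,
      ((discToStrip w.1 + discToStrip w.2) / 2).re ≤ 0 := by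
    rintro w ⟨hw₁, hw₂⟩
    rw [div_ofNat_re, add_re, re_discToStrip_eq_zero (norm_lt_one_of_mem_unitSegment hw₁) hw₁.1,
      re_discToStrip_eq_zero (norm_lt_one_of_mem_unitSegment hw₂) hw₂.1]
    norm_num
  simpa using le_relExtremal (hF.plurisubharmonicOn_re (isOpen_ball.prod isOpen_ball)) hu₁ hu₀ hz

/-- With `A₁ = A₂ = A₃ = (-1,1)`, `D₁ = D₂ = D₃ = 𝔻` and
`w = i/√3`, the point `z = (0,w,w)` belongs to the `(3,2)`-cross
`X_{3,2} = (D×D×A) ∪ (D×A×D) ∪ (A×D×D)` but satisfies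
`h_{A₁×A₂,D₁×D₂}(0,w) + h_{A₃,D₃}(w) ≥ 1`, i.e. it does not belong to
`{z : max(h(z₁),h(z₂)) + h(z₃) < 1}`. -/
theorem point_in_cross_not_in_hullZ :
    let A : Set ℂ := {z : ℂ | z.im = 0 ∧ -1 < z.re ∧ z.re < 1}
    let D : Set ℂ := Metric.ball (0 : ℂ) 1
    let w : ℂ := Complex.I / ((Real.sqrt 3 : ℝ) : ℂ)
    let z : ℂ × ℂ × ℂ := ((0 : ℂ), w, w)
    z ∈ (D ×ˢ D ×ˢ A) ∪ (D ×ˢ A ×ˢ D) ∪ (A ×ˢ D ×ˢ D) ∧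
    1 ≤ relExtremal (A ×ˢ A) (D ×ˢ D) (z.1, z.2.1) + relExtremal A D z.2.2 ∧
    ¬ (max (relExtremal A D z.1) (relExtremal A D z.2.1) + relExtremal A D z.2.2 < 1) := by
  intro A D w z
  have hw : w ∈ D := mem_ball_zero_iff.2 norm_I_div_sqrt_three
  have h0 : (0 : ℂ) ∈ A := ⟨rfl, by norm_num, by norm_num⟩
  have hw_ge : 2 / 3 ≤ relExtremal A D w :=
    re_discToStrip_I_div_sqrt_three ▸ re_discToStrip_le_relExtremal hw
  have h0w_ge : 1 / 3 ≤ relExtremal (A ×ˢ A) (D ×ˢ D) (0, w) := by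
    have := re_discToStrip_add_le_relExtremal_prod (z := (0, w)) ⟨mem_ball_self one_pos, hw⟩
    rw [re_discToStrip_eq_zero (by simp) rfl, re_discToStrip_I_div_sqrt_three] at this
    norm_num at this
    exact this
  refine ⟨Or.inr ⟨h0, hw, hw⟩, by linarith, fun h => ?_⟩
  linarith [le_max_right (relExtremal A D 0) (relExtremal A D w)]
end
end

section
/- Let M ⊂ ℂⁿ × ℂᵐ be a pluripolar set. Then there exists a pluripolar set Q ⊂ ℂⁿ such that for every a ∉ Q, the fiber M_a := {w ∈ ℂᵐ : (a,w) ∈ M} is pluripolar in ℂᵐ. -/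
open Set Filter Topology

noncomputable section

theorem PlurisubharmonicOn.comp_continuousAffineMap {E F : Type*} [NormedAddCommGroup E]
    [NormedSpace ℂ E] [NormedAddCommGroup F] [NormedSpace ℂ F] {u : F → EReal} {s : Set F}
    (hu : PlurisubharmonicOn u s) (f : E →ᴬ[ℂ] F) :
    PlurisubharmonicOn (u ∘ f) (f ⁻¹' s) := by
  refine ⟨hu.1.comp f.continuous.continuousOn (mapsTo_preimage f s), ?_⟩
  intro a v r hr hdisc p hp
  have hline (t : ℂ) : f (a + t • v) = f a + t • f.contLinear v := by
    rw [add_comm, ← vadd_eq_add, ContinuousAffineMap.map_vadd, vadd_eq_add, add_comm, map_smul]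
  exact hu.2 (f a) (f.contLinear v) r hr (fun t ht => hline t ▸ hdisc t ht) p
    (fun t ht => hline t ▸ hp t ht)

section Slices

variable {E F : Type*} [NormedAddCommGroup E] [NormedSpace ℂ E] [NormedAddCommGroup F]
  [NormedSpace ℂ F] {u : E × F → EReal}

theorem PlurisubharmonicOn.slice_left (hu : PlurisubharmonicOn u univ) (w : F) :
    PlurisubharmonicOn (fun z => u (z, w)) univ :=
  hu.comp_continuousAffineMap ((ContinuousAffineMap.id ℂ E).prod (.const ℂ E w))

theorem PlurisubharmonicOn.slice_right (hu : PlurisubharmonicOn u univ) (z : E) :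
    PlurisubharmonicOn (fun w => u (z, w)) univ :=
  hu.comp_continuousAffineMap ((ContinuousAffineMap.const ℂ F z).prod (.id ℂ F))

end Slices

/-- if `M ⊆ ℂⁿ × ℂᵐ` is pluripolar, then there is a pluripolar
set `Q ⊆ ℂⁿ` such that all fibers `M_a = {w : (a,w) ∈ M}` with `a ∉ Q` are
pluripolar in `ℂᵐ`. -/
theorem pluripolar_fibers {n m : ℕ} (M : Set ((Fin n → ℂ) × (Fin m → ℂ)))
    (hM : Pluripolar M) :
    ∃ Q : Set (Fin n → ℂ), Pluripolar Q ∧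
      ∀ a ∉ Q, Pluripolar {w : Fin m → ℂ | (a, w) ∈ M} := by
  obtain ⟨u, hu, ⟨⟨a₀, w₀⟩, hu₀⟩, hMu⟩ := hM
  -- A point of `Q` is where the horizontal slice through `w₀` hits `-∞`; off `Q` the vertical
  -- slice is finite at `w₀`, so it is a non-trivial psh function which is `-∞` on the fibre.
  refine ⟨{a | u (a, w₀) = ⊥}, ⟨_, hu.slice_left w₀, ⟨a₀, hu₀⟩, subset_rfl⟩, fun a ha => ?_⟩
  exact ⟨_, hu.slice_right a, ⟨w₀, ha⟩, fun w hw => hMu hw⟩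
end
end
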